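/- In a right-angled Coxeter system, the centralizer of a standard generator r in W is exactly the special (standard parabolic) subgroup generated by the set C(r) of generators commuting with r. -/

import Mathlib

/-!
Induction on length: a nontrivial `w` centralizing `s r` has a right descent `j` with
`s j * s r = s r * s j`. Either `r` itself is a descent, or for any descent `j` of `w` the element
`w * s r = s r * w` has the two right descents `j` and `r`, which forces `m(j, r) ≠ ∞`.

That last fact: write `u = v * π a` with `v` of minimal length in `u W_{i,j}` and `a` an
alternating word in `i, j`. When `m(i, j) = ∞`, `ℓ (v * π a) = ℓ v + |a|` for every alternating
`a`, by the exchange condition (obtained from the sign representation on `W × ℤˣ`) together with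
the action of `W_{i,j}` on `ℤ` as the infinite dihedral group, under which alternating words are
reduced. Hence only the last letter of `a` can be a right descent of `u`.
-/

open List

def CoxeterMatrix.IsRightAngled {B : Type*} (M : CoxeterMatrix B) : Prop :=
  ∀ i j : B, i ≠ j → M i j = 2 ∨ M i j = 0

theorem CoxeterMatrix.IsRightAngled.isLiftable {B G : Type*} [Monoid G] {M : CoxeterMatrix B}
    (hM : M.IsRightAngled) {f : B → G} (hsq : ∀ i, f i * f i = 1)
    (hcomm : ∀ i j, M i j = 2 → Commute (f i) (f j)) : M.IsLiftable f := by
  intro i j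
  obtain rfl | hij := eq_or_ne i j
  · rw [M.diagonal, pow_one, hsq]
  obtain h2 | h0 := hM i j hij
  · rw [h2, (hcomm i j h2).mul_pow, sq, sq, hsq, hsq, one_mul]
  · rw [h0, pow_zero]

namespace CoxeterSystem

variable {B W : Type*} [Group W] {M : CoxeterMatrix B} (cs : CoxeterSystem M W)

local prefix:100 "s" => cs.simple
local prefix:100 "π" => cs.wordProd
local prefix:100 "ℓ" => cs.length
local prefix:100 "ris" => cs.rightInvSeq

theorem simple_mul_simple_comm_of_M_eq_two {i j : B} (h : M i j = 2) :
    s i * s j = s j * s i := by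
  have h1 : (s i * s j) * (s i * s j) = 1 := by
    rw [← sq, ← h, simple_mul_simple_pow]
  rw [eq_inv_of_mul_eq_one_left h1, mul_inv_rev, inv_simple, inv_simple]

theorem simple_conj_eq_iff (i : B) (t u : W) : s i * t * s i = u ↔ t = s i * u * s i := by
  constructor <;> rintro rfl <;> simp [mul_assoc]

theorem simple_conj_eq_simple_iff (i : B) (t : W) : s i * t * s i = s i ↔ t = s i := by
  rw [simple_conj_eq_iff, simple_mul_simple_cancel_right]

section SignRepresentation

variable [DecidableEq W]

def signPerm (i : B) : Equiv.Perm (W × ℤˣ) :=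
  Function.Involutive.toPerm (fun p => (s i * p.1 * s i, if p.1 = s i then -p.2 else p.2))
    (by
      rintro ⟨t, e⟩
      simp only [simple_conj_eq_simple_iff]
      ext
      · simp [mul_assoc]
      · split_ifs <;> simp)

theorem signPerm_apply (i : B) (t : W) (e : ℤˣ) :
    cs.signPerm i (t, e) = (s i * t * s i, if t = s i then -e else e) := rfl

theorem commute_signPerm {i j : B} (h : M i j = 2) : Commute (cs.signPerm i) (cs.signPerm j) := by
  have hij := cs.simple_mul_simple_comm_of_M_eq_two h
  have hj : s j * s i * s j = s i := by rw [← hij, mul_assoc, simple_mul_simple_self, mul_one]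
  have hi : s i * s j * s i = s j := by rw [hij, mul_assoc, simple_mul_simple_self, mul_one]
  ext ⟨t, e⟩ : 1
  simp only [Equiv.Perm.mul_apply, signPerm_apply, simple_conj_eq_iff, hi, hj]
  ext
  · simp only [← mul_assoc, hij]
    simp only [mul_assoc, hij]
  · split_ifs <;> simp_all

def signRep (hM : M.IsRightAngled) : W →* Equiv.Perm (W × ℤˣ) :=
  cs.lift ⟨cs.signPerm, hM.isLiftable (fun i => Equiv.ext fun p => (cs.signPerm i).left_inv p)
    fun _ _ => cs.commute_signPerm⟩

theorem signRep_wordProd (hM : M.IsRightAngled) (ω : List B) (t : W) (e : ℤˣ) :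
    cs.signRep hM (π ω) (t, e) = (π ω * t * (π ω)⁻¹, e * (-1) ^ (ris ω).count t) := by
  induction ω generalizing t e with
  | nil => simp
  | cons i ω ih =>
    have hcond : π ω * t * (π ω)⁻¹ = s i ↔ (π ω)⁻¹ * s i * π ω = t := by
      constructor
      · rintro h; rw [← h]; group
      · rintro rfl; group
    rw [wordProd_cons, map_mul, Equiv.Perm.mul_apply, ih, signRep, lift_apply_simple,
      signPerm_apply, rightInvSeq, count_cons]
    ext
    · simp [mul_assoc]
    · simp only [hcond, beq_iff_eq]
      split_ifs <;> simp [pow_succ]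

theorem neg_one_pow_count_rightInvSeq_eq (hM : M.IsRightAngled) {ω ω' : List B}
    (h : π ω = π ω') (t : W) : (-1 : ℤˣ) ^ (ris ω).count t = (-1) ^ (ris ω').count t := by
  have := congrArg (fun w => (cs.signRep hM w (t, 1)).2) h
  simpa only [signRep_wordProd, one_mul] using this

end SignRepresentation

theorem mem_rightInvSeq_iff_of_isReduced (hM : M.IsRightAngled) {ω ω' : List B}
    (hω : cs.IsReduced ω) (hω' : cs.IsReduced ω') (h : π ω = π ω') (t : W) :
    t ∈ ris ω ↔ t ∈ ris ω' := by
  classical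
  have key : ∀ {l : List W}, l.Nodup → ((-1 : ℤˣ) ^ l.count t = -1 ↔ t ∈ l) := by
    intro l hl
    by_cases ht : t ∈ l
    · simp [count_eq_one_of_mem hl ht, ht]
    · simp [count_eq_zero_of_not_mem ht, ht]
  rw [← key hω.nodup_rightInvSeq, ← key hω'.nodup_rightInvSeq,
    cs.neg_one_pow_count_rightInvSeq_eq hM h]

theorem simple_mem_rightInvSeq_of_isRightDescent (hM : M.IsRightAngled) {ω : List B}
    (hω : cs.IsReduced ω) {x : B} (hx : cs.IsRightDescent (π ω) x) : s x ∈ ris ω := by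
  obtain ⟨ω', hω', hπ⟩ := cs.exists_isReduced (π ω * s x)
  have hπx : π (ω'.concat x) = π ω := by
    rw [wordProd_concat, ← hπ, simple_mul_simple_cancel_right]
  have hred : cs.IsReduced (ω'.concat x) := by
    have := cs.length_mul_simple (π ω) x
    unfold IsRightDescent at hx
    rw [IsReduced, hπx, length_concat, ← hω'.eq, ← hπ]
    omega
  rw [← cs.mem_rightInvSeq_iff_of_isReduced hM hred hω hπx, rightInvSeq_concat]
  simp

theorem exists_eraseIdx_of_isRightDescent (hM : M.IsRightAngled) {ω : List B}
    (hω : cs.IsReduced ω) {x : B} (hx : cs.IsRightDescent (π ω) x) :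
    ∃ k < ω.length, π ω * s x = π (ω.eraseIdx k) := by
  obtain ⟨k, hk, hkx⟩ :=
    List.mem_iff_getElem.mp (cs.simple_mem_rightInvSeq_of_isRightDescent hM hω hx)
  refine ⟨k, by rwa [length_rightInvSeq] at hk, ?_⟩
  rw [← wordProd_mul_getD_rightInvSeq, getD_eq_getElem _ _ hk, hkx]

section Dihedral

variable [DecidableEq B] {i j : B}

/-- `s i` and `s j` act on `ℤ` as the reflections in `1/2` and `-1/2`, so that `s i * s j` is
the translation by `2`; all other generators act trivially. -/
def dihedralGen (i j k : B) : Equiv.Perm ℤ :=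
  if k = i then Equiv.subLeft 1 else if k = j then Equiv.subLeft (-1) else 1

theorem dihedralGen_eq_one {k : B} (hi : k ≠ i) (hj : k ≠ j) : dihedralGen i j k = 1 := by
  simp [dihedralGen, hi, hj]

theorem isLiftable_dihedralGen (hM : M.IsRightAngled) (h0 : M i j = 0) :
    M.IsLiftable (dihedralGen i j) := by
  refine hM.isLiftable (fun k => ?_) (fun k l hkl => ?_)
  · ext z
    unfold dihedralGen
    split_ifs <;> simp
  · by_cases hk : k = i ∨ k = j
    · by_cases hl : l = i ∨ l = j
      · rcases hk with hk | hk <;> rcases hl with hl | hl <;>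
          simp [hk, hl, h0, M.symmetric j i] at hkl
      · rw [dihedralGen_eq_one (not_or.mp hl).1 (not_or.mp hl).2]
        exact Commute.one_right _
    · rw [dihedralGen_eq_one (not_or.mp hk).1 (not_or.mp hk).2]
      exact Commute.one_left _

theorem abs_dihedralGen_apply_le (k : B) (z : ℤ) : |dihedralGen i j k z| ≤ |z| + 1 := by
  unfold dihedralGen
  split_ifs
  · simpa [add_comm] using abs_sub (1 : ℤ) z
  · simpa [add_comm] using abs_sub (-1 : ℤ) z
  · simp

def dihedralRep (hM : M.IsRightAngled) (h0 : M i j = 0) : W →* Equiv.Perm ℤ :=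
  cs.lift ⟨dihedralGen i j, isLiftable_dihedralGen hM h0⟩

variable (hM : M.IsRightAngled) (h0 : M i j = 0)

theorem dihedralRep_simple (k : B) : cs.dihedralRep hM h0 (s k) = dihedralGen i j k :=
  cs.lift_apply_simple _ k

theorem dihedralRep_wordProd_cons (k : B) (ω : List B) (z : ℤ) :
    cs.dihedralRep hM h0 (π (k :: ω)) z = dihedralGen i j k (cs.dihedralRep hM h0 (π ω) z) := by
  rw [wordProd_cons, map_mul, dihedralRep_simple]
  rfl

theorem abs_dihedralRep_wordProd_le (ω : List B) (z : ℤ) :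
    |cs.dihedralRep hM h0 (π ω) z| ≤ |z| + ω.length := by
  induction ω with
  | nil => simp
  | cons k ω ih =>
    rw [dihedralRep_wordProd_cons, length_cons, Nat.cast_succ]
    linarith [abs_dihedralGen_apply_le (i := i) (j := j) k (cs.dihedralRep hM h0 (π ω) z)]

theorem abs_dihedralRep_le_length (w : W) : |cs.dihedralRep hM h0 w 0| ≤ ℓ w := by
  obtain ⟨ω, hω, rfl⟩ := cs.exists_isReduced w
  simpa [hω.eq] using cs.abs_dihedralRep_wordProd_le hM h0 ω 0

theorem dihedralRep_wordProd_of_isChain (x : B) (a : List B) (hsub : x :: a ⊆ [i, j])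
    (ha : (x :: a).IsChain (· ≠ ·)) :
    cs.dihedralRep hM h0 (π (x :: a)) 0 = (if x = i then 1 else -1) * (a.length + 1) := by
  have hij : i ≠ j := by rintro rfl; simp at h0
  induction a generalizing x with
  | nil =>
    have := hsub mem_cons_self
    simp only [mem_cons, not_mem_nil, or_false] at this
    rcases this with rfl | rfl <;> simp [dihedralRep_simple, dihedralGen, hij.symm]
  | cons y a ih =>
    rw [dihedralRep_wordProd_cons, ih y (fun z hz => hsub (mem_cons_of_mem x hz)) ha.tail]
    have hx := hsub mem_cons_self
    have hy := hsub (mem_cons_of_mem x mem_cons_self)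
    have hxy : x ≠ y := (isChain_cons_cons.mp ha).1
    simp only [mem_cons, not_mem_nil, or_false] at hx hy
    rcases hx with rfl | rfl <;> rcases hy with rfl | rfl <;>
      grind [dihedralGen, Equiv.subLeft_apply]

end Dihedral

theorem isReduced_of_isChain (hM : M.IsRightAngled) {i j : B} (h0 : M i j = 0) {a : List B}
    (hsub : a ⊆ [i, j]) (ha : a.IsChain (· ≠ ·)) : cs.IsReduced a := by
  classical
  refine le_antisymm (cs.length_wordProd_le a) ?_
  cases a with
  | nil => simp
  | cons x a =>
    have := cs.abs_dihedralRep_le_length hM h0 (π (x :: a))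
    rw [cs.dihedralRep_wordProd_of_isChain hM h0 x a hsub ha] at this
    have hsign : |(if x = i then 1 else -1 : ℤ)| = 1 := by split_ifs <;> simp
    rw [abs_mul, hsign, one_mul, abs_of_nonneg (by positivity)] at this
    rw [length_cons]
    exact_mod_cast this

theorem exists_sublist_isChain_wordProd_eq (ω : List B) :
    ∃ ω', ω' <+ ω ∧ ω'.IsChain (· ≠ ·) ∧ π ω' = π ω := by
  induction h : ω.length using Nat.strong_induction_on generalizing ω with
  | _ n ih =>
    by_cases hω : ω.IsChain (· ≠ ·)
    · exact ⟨ω, Sublist.refl ω, hω, rfl⟩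
    obtain ⟨x, y, l₁, l₂, rfl, hxy⟩ : ∃ x y l₁ l₂, ω = l₁ ++ x :: y :: l₂ ∧ x = y := by
      simpa [isChain_iff_forall_rel_of_append_cons_cons] using hω
    subst hxy
    obtain ⟨ω', hsub, hchain, hπ⟩ := ih (l₁ ++ l₂).length (by simp [← h]) (l₁ ++ l₂) rfl
    refine ⟨ω', hsub.trans ((sublist_append_right [x, x] l₂).append_left l₁), hchain, ?_⟩
    rw [hπ, wordProd_append, wordProd_append, wordProd_cons, wordProd_cons,
      simple_mul_simple_cancel_left]

theorem length_mul_wordProd_of_isChain (hM : M.IsRightAngled) {i j : B} (h0 : M i j = 0) {v : W}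
    (hv : ∀ ω ⊆ [i, j], ℓ v ≤ ℓ (v * π ω)) {a : List B} (hsub : a ⊆ [i, j])
    (ha : a.IsChain (· ≠ ·)) : ℓ (v * π a) = ℓ v + a.length := by
  induction a using List.reverseRecOn with
  | nil => simp
  | append_singleton a x ih =>
    have hsub' : a ⊆ [i, j] := fun y hy => hsub (mem_append_left _ hy)
    have IH := ih hsub' ha.left_of_append
    have hprod : π (a ++ [x]) = π a * s x := by rw [wordProd_append, wordProd_singleton]
    rw [hprod, ← mul_assoc, length_append, length_singleton]
    rcases cs.length_mul_simple (v * π a) x with hup | hdown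
    · omega
    exfalso
    obtain ⟨ωv, hωv, rfl⟩ := cs.exists_isReduced v
    have hred : cs.IsReduced (ωv ++ a) := by
      rw [IsReduced, wordProd_append, IH, hωv.eq, length_append]
    obtain ⟨k, hk, hkx⟩ := cs.exists_eraseIdx_of_isRightDescent hM hred (x := x)
      (by rw [IsRightDescent, wordProd_append]; omega)
    rw [wordProd_append] at hkx
    by_cases hkv : k < ωv.length
    · -- the deleted letter lies in `ωv`: this shortens `v` within its coset
      have hmin := hv (a ++ [x] ++ a.reverse)
        (append_subset.mpr ⟨hsub, fun y hy => hsub' (mem_reverse.mp hy)⟩)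
      rw [eraseIdx_append_of_lt_length hkv, wordProd_append] at hkx
      rw [wordProd_append, wordProd_reverse, hprod, ← mul_assoc, ← mul_assoc, hkx,
        mul_inv_cancel_right] at hmin
      have := cs.length_wordProd_le (ωv.eraseIdx k)
      have := length_eraseIdx_add_one hkv
      have := hωv.eq
      omega
    · -- the deleted letter lies in `a`: this shortens the reduced word `a ++ [x]`
      rw [eraseIdx_append_of_length_le (not_lt.mp hkv), wordProd_append, mul_assoc] at hkx
      have hred' := cs.isReduced_of_isChain hM h0 hsub ha
      rw [IsReduced, hprod, mul_left_cancel hkx, length_append, length_singleton] at hred'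
      have := cs.length_wordProd_le (a.eraseIdx (k - ωv.length))
      have := length_eraseIdx_le a (k - ωv.length)
      omega

theorem exists_minimal_mul_wordProd_isChain (u : W) (i j : B) :
    ∃ v a, (∀ ω ⊆ [i, j], ℓ v ≤ ℓ (v * π ω)) ∧ a ⊆ [i, j] ∧ a.IsChain (· ≠ ·) ∧
      u = v * π a := by
  obtain ⟨c, hc, hmin⟩ := (InvImage.wf (fun c : List B => ℓ (u * π c)) wellFounded_lt).has_min
    {c | c ⊆ [i, j]} ⟨[], nil_subset _⟩
  obtain ⟨a, hac, ha, hπ⟩ := cs.exists_sublist_isChain_wordProd_eq c.reverse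
  refine ⟨u * π c, a, fun ω hω => ?_, fun y hy => hc (mem_reverse.mp (hac.subset hy)), ha, ?_⟩
  · have := hmin (c ++ ω) (append_subset.mpr ⟨hc, hω⟩)
    rw [InvImage, wordProd_append, ← mul_assoc, not_lt] at this
    exact this
  · rw [hπ, wordProd_reverse, mul_inv_cancel_right]

theorem M_ne_zero_of_isRightDescent (hM : M.IsRightAngled) {u : W} {i j : B} (hij : i ≠ j)
    (hi : cs.IsRightDescent u i) (hj : cs.IsRightDescent u j) : M i j ≠ 0 := by
  intro h0
  obtain ⟨v, a, hv, hsub, ha, rfl⟩ := cs.exists_minimal_mul_wordProd_isChain u i j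
  have hlast : ∀ x ∈ [i, j], cs.IsRightDescent (v * π a) x → a.getLast? = some x := by
    intro x hx hdesc
    by_contra hne
    have hchain : (a ++ [x]).IsChain (· ≠ ·) :=
      isChain_append.mpr ⟨ha, isChain_singleton x, fun y hy z hz => by
        rw [head?_cons, Option.mem_some_iff] at hz
        rintro rfl
        exact hne (hz ▸ hy)⟩
    have hlen := cs.length_mul_wordProd_of_isChain hM h0 hv
      (append_subset.mpr ⟨hsub, cons_subset.mpr ⟨hx, nil_subset _⟩⟩) hchain
    rw [wordProd_append, wordProd_singleton, ← mul_assoc] at hlen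
    rw [IsRightDescent, hlen, cs.length_mul_wordProd_of_isChain hM h0 hv hsub ha] at hdesc
    simp at hdesc
  exact hij (Option.some_injective _ ((hlast i (by simp) hi).symm.trans (hlast j (by simp) hj)))

theorem exists_rightDescent_commute_of_mem_centralizer (hM : M.IsRightAngled) {r : B} {w : W}
    (hw : w ∈ Subgroup.centralizer {s r}) (hw1 : w ≠ 1) :
    ∃ j, cs.IsRightDescent w j ∧ s j * s r = s r * s j := by
  by_cases hr : cs.IsRightDescent w r
  · exact ⟨r, hr, rfl⟩
  obtain ⟨j, hj⟩ := cs.exists_rightDescent_of_ne_one hw1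
  have hjr : j ≠ r := by rintro rfl; exact hr hj
  have hur : cs.IsRightDescent (w * s r) r := by
    rwa [isRightDescent_iff_not_isRightDescent_mul, simple_mul_simple_cancel_right]
  have huj : cs.IsRightDescent (w * s r) j := by
    have hmul : w * s r * s j = s r * (w * s j) := by
      rw [Subgroup.mem_centralizer_singleton_iff.mp hw, mul_assoc]
    rw [not_isRightDescent_iff] at hr
    rw [IsRightDescent, hmul, hr]
    have := cs.length_simple_mul (w * s j) r
    unfold IsRightDescent at hj
    omega
  obtain h2 | h0 := hM j r hjr
  · exact ⟨j, hj, cs.simple_mul_simple_comm_of_M_eq_two h2⟩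
  · exact absurd h0 (cs.M_ne_zero_of_isRightDescent hM hjr huj hur)

theorem centralizer_simple_le_closure (hM : M.IsRightAngled) (r : B) :
    Subgroup.centralizer {s r} ≤ Subgroup.closure (cs.simple '' {j | s j * s r = s r * s j}) := by
  intro w hw
  induction h : ℓ w using Nat.strong_induction_on generalizing w with
  | _ n ih =>
    obtain rfl | hw1 := eq_or_ne w 1
    · exact one_mem _
    obtain ⟨j, hj, hjr⟩ := cs.exists_rightDescent_commute_of_mem_centralizer hM hw hw1
    rw [← cs.simple_mul_simple_cancel_right (w := w) j]
    refine mul_mem (ih _ (h ▸ hj) ?_ rfl) (Subgroup.subset_closure ⟨j, hjr, rfl⟩)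
    exact mul_mem hw (Subgroup.mem_centralizer_singleton_iff.mpr hjr)

end CoxeterSystem

/-- In a right-angled Coxeter system, the centralizer of a standard generator `r` is the
special (standard parabolic) subgroup generated by the set `C(r)` of generators commuting
with `r`. -/
theorem right_angled_centralizer_of_generator
    {B W : Type*} [Group W] (M : CoxeterMatrix B) (cs : CoxeterSystem M W)
    (rightAngled : ∀ i j : B, i ≠ j → M i j = 2 ∨ M i j = 0) (r : B) :
    Subgroup.centralizer {cs.simple r} =
      Subgroup.closure
        (cs.simple '' {j : B | cs.simple j * cs.simple r = cs.simple r * cs.simple j}) := by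
  refine le_antisymm (cs.centralizer_simple_le_closure rightAngled r) ?_
  rw [Subgroup.closure_le]
  rintro _ ⟨j, hj, rfl⟩
  exact Subgroup.mem_centralizer_singleton_iff.mpr hj
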